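/- Let G be connected of order at least 4 with sdiam_4(G) > (10/7)·srad_4(G), let D = {v_1,v_2,v_3,v_4} realize the Steiner 4-diameter and v_0 realize the Steiner 4-radius, and let T_1 be a Steiner tree of D_1 = (D\{v_1}) ∪ {v_0}. Then T_1 is not a path (with the four vertices of D_1 as its endpoints and interior vertices in order). -/

import Mathlib

/-- The Steiner distance of a vertex set `S` in `G`: the minimum number of edges
of a connected subgraph of `G` containing all vertices of `S`. -/
noncomputable def steinerDist {V : Type*} [Fintype V] (G : SimpleGraph V) (S : Set V) : ℕ :=
  sInf {n | ∃ H : G.Subgraph, H.Connected ∧ S ⊆ H.verts ∧ H.edgeSet.ncard = n}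

/-- The Steiner `k`-eccentricity of a vertex `v`:
the maximum Steiner distance of a `k`-set containing `v`. -/
noncomputable def steinerEcc {V : Type*} [Fintype V] (G : SimpleGraph V) (k : ℕ) (v : V) : ℕ :=
  sSup {n | ∃ S : Finset V, v ∈ S ∧ S.card = k ∧ steinerDist G (S : Set V) = n}

/-- The Steiner `k`-radius of `G`. -/
noncomputable def srad {V : Type*} [Fintype V] (G : SimpleGraph V) (k : ℕ) : ℕ :=
  sInf (Set.range (steinerEcc G k))

/-- The Steiner `k`-diameter of `G`. -/
noncomputable def sdiam {V : Type*} [Fintype V] (G : SimpleGraph V) (k : ℕ) : ℕ :=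
  sSup (Set.range (steinerEcc G k))

/-- `H` is a Steiner tree for `S` in `G`: a connected acyclic subgraph containing `S`
whose number of edges equals the Steiner distance of `S`. -/
def IsSteinerTree {V : Type*} [Fintype V] (G : SimpleGraph V) (S : Set V) (H : G.Subgraph) :
    Prop :=
  H.Connected ∧ S ⊆ H.verts ∧ H.coe.IsAcyclic ∧ H.edgeSet.ncard = steinerDist G S

/-- The set of leaves (vertices of degree 1) of a subgraph. -/
noncomputable def subLeaves {V : Type*} [Fintype V] {G : SimpleGraph V} (H : G.Subgraph) :
    Set V :=
  {v | v ∈ H.verts ∧ (H.neighborSet v).ncard = 1}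

section Aux
open SimpleGraph

variable {V : Type*} [Fintype V] {G : SimpleGraph V}

lemma aux_top_connected (hG : G.Connected) : (⊤ : G.Subgraph).Connected :=
  SimpleGraph.Subgraph.connected_iff'.mpr (SimpleGraph.Subgraph.topIso.connected_iff.mpr hG)

lemma aux_sSet_nonempty (hG : G.Connected) (S : Set V) :
    {n | ∃ H : G.Subgraph, H.Connected ∧ S ⊆ H.verts ∧ H.edgeSet.ncard = n}.Nonempty :=
  ⟨_, ⊤, aux_top_connected hG, by simp [SimpleGraph.Subgraph.verts_top], rfl⟩

lemma aux_exists_steiner_subgraph (hG : G.Connected) (S : Set V) :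
    ∃ H : G.Subgraph, H.Connected ∧ S ⊆ H.verts ∧ H.edgeSet.ncard = steinerDist G S :=
  Nat.sInf_mem (aux_sSet_nonempty hG S)

lemma aux_steinerDist_le_ncard {H : G.Subgraph} (hH : H.Connected) {S : Set V}
    (hS : S ⊆ H.verts) : steinerDist G S ≤ H.edgeSet.ncard :=
  Nat.sInf_le ⟨H, hH, hS, rfl⟩

lemma aux_steinerDist_mono (hG : G.Connected) {S S' : Set V} (h : S ⊆ S') :
    steinerDist G S ≤ steinerDist G S' := by
  obtain ⟨H, hc, hs, he⟩ := aux_exists_steiner_subgraph hG S'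
  exact he ▸ aux_steinerDist_le_ncard hc (h.trans hs)

lemma aux_steinerDist_le_card_edges (hG : G.Connected) (S : Set V) :
    steinerDist G S ≤ G.edgeSet.ncard := by
  simpa [SimpleGraph.Subgraph.edgeSet_top] using
    aux_steinerDist_le_ncard (aux_top_connected hG)
      (show S ⊆ (⊤ : G.Subgraph).verts by simp [SimpleGraph.Subgraph.verts_top])

lemma aux_steinerDist_le_steinerEcc (hG : G.Connected) {v : V} {F : Finset V}
    (hv : v ∈ F) (h4 : F.card = 4) :
    steinerDist G (F : Set V) ≤ steinerEcc G 4 v := by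
  have hbdd : BddAbove
      {n | ∃ S : Finset V, v ∈ S ∧ S.card = 4 ∧ steinerDist G (S : Set V) = n} := by
    refine ⟨G.edgeSet.ncard, ?_⟩
    rintro n ⟨S, -, -, rfl⟩
    exact aux_steinerDist_le_card_edges hG _
  exact le_csSup hbdd ⟨F, hv, h4, rfl⟩

lemma aux_steinerDist_insert_le (hG : G.Connected) {S : Set V} {y : V} (hy : y ∈ S) (x : V) :
    steinerDist G (insert x S) ≤ steinerDist G S + G.dist y x := by
  classical
  obtain ⟨H, hc, hs, he⟩ := aux_exists_steiner_subgraph hG S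
  obtain ⟨p, hp⟩ := hG.exists_walk_length_eq_dist y x
  have hconn : (H ⊔ p.toSubgraph).Connected :=
    Subgraph.connected_sup hc.preconnected p.toSubgraph_connected.preconnected
      ⟨y, by rw [Subgraph.verts_inf]; exact ⟨hs hy, p.start_mem_verts_toSubgraph⟩⟩
  have hsub : insert x S ⊆ (H ⊔ p.toSubgraph).verts := by
    rw [Subgraph.verts_sup]
    rintro z (rfl | hz)
    · exact Or.inr p.end_mem_verts_toSubgraph
    · exact Or.inl (hs hz)
  refine (aux_steinerDist_le_ncard hconn hsub).trans ?_
  rw [Subgraph.edgeSet_sup]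
  refine (Set.ncard_union_le _ _).trans ?_
  have h2 : p.toSubgraph.edgeSet.ncard ≤ G.dist y x := by
    rw [p.edgeSet_toSubgraph]
    have hls : {e | e ∈ p.edges} = (p.edges.toFinset : Set (Sym2 V)) := by simp
    rw [Walk.edgeSet, hls, Set.ncard_coe_finset]
    calc p.edges.toFinset.card ≤ p.edges.length := p.edges.toFinset_card_le
      _ = p.length := p.length_edges
      _ = G.dist y x := hp
  omega

end Aux

theorem T1_not_path {V : Type*} [Fintype V] (G : SimpleGraph V)
    (hG : G.Connected) (hcard : 4 ≤ Fintype.card V)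
    (hps : (sdiam G 4 : ℝ) > 10 / 7 * srad G 4)
    (vs : Fin 4 → V) (hinj : Function.Injective vs)
    (hD : steinerDist G (Set.range vs) = sdiam G 4)
    (v₀ : V) (hv₀ : steinerEcc G 4 v₀ = srad G 4)
    (T1 : G.Subgraph) (hT1 : IsSteinerTree G ((Set.range vs \ {vs 0}) ∪ {v₀}) T1) :
    ¬ ∃ u : Fin 4 → V,
        Set.range u = (Set.range vs \ {vs 0}) ∪ {v₀} ∧
        T1.edgeSet.ncard =
          T1.spanningCoe.dist (u 0) (u 1) + T1.spanningCoe.dist (u 1) (u 2) +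
            T1.spanningCoe.dist (u 2) (u 3) := by
  classical
  rintro ⟨u, hu, hsum⟩
  have hr0 : (0 : ℝ) ≤ (srad G 4 : ℝ) := Nat.cast_nonneg _
  by_cases hv0 : v₀ ∈ Set.range vs
  · -- degenerate case: v₀ is one of the vᵢ, then sdiam ≤ srad, contradiction
    have hF : ((Finset.univ.image vs : Finset V) : Set V) = Set.range vs := by simp
    have hcard4 : (Finset.univ.image vs).card = 4 := by
      rw [Finset.card_image_of_injective _ hinj, Finset.card_univ, Fintype.card_fin]
    have hv0F : v₀ ∈ Finset.univ.image vs := by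
      rw [← Finset.mem_coe, hF]; exact hv0
    have h1 : steinerDist G ((Finset.univ.image vs : Finset V) : Set V) ≤ steinerEcc G 4 v₀ :=
      aux_steinerDist_le_steinerEcc hG hv0F hcard4
    rw [hF, hD, hv₀] at h1
    have h1' : (sdiam G 4 : ℝ) ≤ (srad G 4 : ℝ) := by exact_mod_cast h1
    linarith
  · obtain ⟨hT1c, hT1v, -, hT1e⟩ := hT1
    -- the finsets corresponding to D \ {vs i} ∪ {v₀}
    have hFgen : ∀ i : Fin 4, ∃ F : Finset V, v₀ ∈ F ∧ F.card = 4 ∧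
        (Set.range vs \ {vs i}) ∪ {v₀} = (F : Set V) := by
      intro i
      refine ⟨insert v₀ ((Finset.univ.image vs).erase (vs i)),
        Finset.mem_insert_self _ _, ?_, ?_⟩
      · rw [Finset.card_insert_of_notMem (fun hmem => hv0 ?_),
          Finset.card_erase_of_mem (Finset.mem_image_of_mem vs (Finset.mem_univ i)),
          Finset.card_image_of_injective _ hinj, Finset.card_univ, Fintype.card_fin]
        rcases Finset.mem_image.mp (Finset.mem_of_mem_erase hmem) with ⟨j, -, hj⟩
        exact ⟨j, hj⟩
      · ext z
        simp only [Set.mem_union, Set.mem_diff, Set.mem_range, Set.mem_singleton_iff,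
          Finset.coe_insert, Set.mem_insert_iff, Finset.coe_erase, Set.mem_diff,
          Finset.mem_coe, Finset.mem_image, Finset.mem_univ, true_and]
        tauto
    -- key inequality: sdiam ≤ srad + d(y, vs i)
    have key : ∀ (i : Fin 4) (y : V), y ∈ (Set.range vs \ {vs i}) ∪ {v₀} →
        sdiam G 4 ≤ srad G 4 + G.dist y (vs i) := by
      intro i y hy
      obtain ⟨F, hvF, hFcard, hFS⟩ := hFgen i
      have hSr : steinerDist G ((Set.range vs \ {vs i}) ∪ {v₀}) ≤ srad G 4 := by
        rw [hFS, ← hv₀]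
        exact aux_steinerDist_le_steinerEcc hG hvF hFcard
      have hmono : steinerDist G (Set.range vs) ≤
          steinerDist G (insert (vs i) ((Set.range vs \ {vs i}) ∪ {v₀})) := by
        apply aux_steinerDist_mono hG
        rintro z ⟨j, rfl⟩
        by_cases hj : vs j = vs i
        · exact hj ▸ Set.mem_insert _ _
        · exact Set.mem_insert_of_mem _ (Or.inl ⟨⟨j, rfl⟩, hj⟩)
      have hins := aux_steinerDist_insert_le hG hy (vs i)
      rw [← hD]; omega
    -- pairwise bound within D₁
    have pair : ∀ a b : V, a ∈ (Set.range vs \ {vs 0}) ∪ {v₀} →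
        b ∈ (Set.range vs \ {vs 0}) ∪ {v₀} → a ≠ b →
        sdiam G 4 ≤ srad G 4 + G.dist a b := by
      intro a b ha hb hab
      rcases hb with ⟨⟨i, rfl⟩, -⟩ | hb
      · refine key i a ?_
        rcases ha with ⟨⟨j, rfl⟩, -⟩ | ha
        · exact Or.inl ⟨⟨j, rfl⟩, hab⟩
        · exact Or.inr ha
      · rw [Set.mem_singleton_iff] at hb
        rcases ha with ⟨⟨j, rfl⟩, -⟩ | ha
        · rw [hb, SimpleGraph.dist_comm]
          exact key j v₀ (Or.inr rfl)
        · exact absurd ((Set.mem_singleton_iff.mp ha).trans hb.symm) hab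
    -- injectivity of u
    obtain ⟨F₀, hvF₀, hF₀card, hF₀S⟩ := hFgen 0
    have huinj : Function.Injective u := by
      have himg : (Finset.univ.image u) = F₀ := by
        apply Finset.coe_injective
        rw [Finset.coe_image, Finset.coe_univ, Set.image_univ, hu, hF₀S]
      have hcardeq : (Finset.univ.image u).card = (Finset.univ : Finset (Fin 4)).card := by
        rw [himg, hF₀card, Finset.card_univ, Fintype.card_fin]
      have hio := Finset.injOn_of_card_image_eq hcardeq
      exact fun a b h => hio (Finset.mem_coe.mpr (Finset.mem_univ a))
        (Finset.mem_coe.mpr (Finset.mem_univ b)) h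
    -- distances in spanningCoe dominate distances in G
    have hdist : ∀ a b : Fin 4, G.dist (u a) (u b) ≤ T1.spanningCoe.dist (u a) (u b) := by
      intro a b
      have hua : u a ∈ T1.verts := hT1v (hu ▸ Set.mem_range_self a)
      have hub : u b ∈ T1.verts := hT1v (hu ▸ Set.mem_range_self b)
      have hreach : T1.spanningCoe.Reachable (u a) (u b) := by
        obtain ⟨p⟩ := hT1c.coe.preconnected ⟨u a, hua⟩ ⟨u b, hub⟩
        exact ⟨(p.map (⟨Subtype.val, fun {x y} h => h⟩ : T1.coe →g T1.spanningCoe)).copy rfl rfl⟩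
      obtain ⟨q, hq⟩ := hreach.exists_walk_length_eq_dist
      calc G.dist (u a) (u b) ≤ (q.mapLe T1.spanningCoe_le).length := SimpleGraph.dist_le _
        _ = q.length := by simp [SimpleGraph.Walk.mapLe]
        _ = _ := hq
    -- edge bound
    have hedge : T1.edgeSet.ncard ≤ srad G 4 := by
      rw [hT1e, hF₀S, ← hv₀]
      exact aux_steinerDist_le_steinerEcc hG hvF₀ hF₀card
    -- the three pair bounds
    have humem : ∀ k : Fin 4, u k ∈ (Set.range vs \ {vs 0}) ∪ {v₀} :=
      fun k => hu ▸ Set.mem_range_self k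
    have h01 : sdiam G 4 ≤ srad G 4 + G.dist (u 0) (u 1) :=
      pair _ _ (humem 0) (humem 1) (fun h => by exact absurd (huinj h) (by decide))
    have h12 : sdiam G 4 ≤ srad G 4 + G.dist (u 1) (u 2) :=
      pair _ _ (humem 1) (humem 2) (fun h => by exact absurd (huinj h) (by decide))
    have h23 : sdiam G 4 ≤ srad G 4 + G.dist (u 2) (u 3) :=
      pair _ _ (humem 2) (humem 3) (fun h => by exact absurd (huinj h) (by decide))
    have hd01 := hdist 0 1
    have hd12 := hdist 1 2
    have hd23 := hdist 2 3
    have h3 : 3 * sdiam G 4 ≤ 4 * srad G 4 := by omega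
    have h3' : (3 : ℝ) * (sdiam G 4 : ℝ) ≤ 4 * (srad G 4 : ℝ) := by exact_mod_cast h3
    linarith
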